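/- If γ : ℝ⁺ → ℝ⁺ is monotone nondecreasing and satisfies ∫₀^{R₀} γ(r)/r² dr < ∞, then the function extended by γ(0) := 0 is differentiable at 0 with derivative 0. -/

import Mathlib

/-!
For `0 < x`, monotonicity gives `γ s / s² ≥ γ x / (2x)²` on `(x, 2x]`, an interval of length `x`,
so `γ x / x ≤ 4 ∫_{(0, 2x]} γ s / s² ds`. By the Dini condition the right-hand side tends to `0`
as `x → 0⁺`, hence so does the difference quotient `γ x / x`.
-/

open Set MeasureTheory Filter Topology

theorem tendsto_setIntegral_Ioc_nhdsGT {E : Type*} [NormedAddCommGroup E] [NormedSpace ℝ E]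
    {f : ℝ → E} {a b : ℝ} (hab : a < b) (hf : IntegrableOn f (Ioc a b)) :
    Tendsto (fun x => ∫ t in Ioc a x, f t) (𝓝[>] a) (𝓝 0) := by
  have hcont := intervalIntegral.continuousOn_primitive (μ := volume)
    ((integrableOn_Icc_iff_integrableOn_Ioc (f := f) (a := a) (b := b)).2 hf)
  simpa using ((hcont a (left_mem_Icc.2 hab.le)).mono_of_mem_nhdsWithin (Icc_mem_nhdsGT hab)).tendsto

theorem div_le_four_mul_setIntegral_Ioc_div_sq {γ : ℝ → ℝ} (hmono : MonotoneOn γ (Ioi 0))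
    {x : ℝ} (hx : 0 < x) (hγx : 0 ≤ γ x)
    (hint : IntegrableOn (fun s => γ s / s ^ 2) (Ioc x (2 * x))) :
    γ x / x ≤ 4 * ∫ s in Ioc x (2 * x), γ s / s ^ 2 := by
  have hbound : ∀ s ∈ Ioc x (2 * x), γ x / (2 * x) ^ 2 ≤ γ s / s ^ 2 := fun s hs => by
    have hs0 : 0 < s := hx.trans hs.1
    have hγ : γ x ≤ γ s := hmono hx hs0 hs.1.le
    exact div_le_div₀ (hγx.trans hγ) hγ (by positivity) (pow_le_pow_left₀ hs0.le hs.2 2)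
  have hlower := setIntegral_ge_of_const_le_real measurableSet_Ioc measure_Ioc_lt_top.ne hbound hint
  rw [Real.volume_real_Ioc_of_le (by linarith)] at hlower
  calc γ x / x = 4 * (γ x / (2 * x) ^ 2 * (2 * x - x)) := by field_simp; ring
    _ ≤ _ := by gcongr

theorem div_le_four_mul_setIntegral_Ioc_zero_div_sq {γ : ℝ → ℝ}
    (hnonneg : ∀ r ∈ Ioi (0 : ℝ), 0 ≤ γ r) (hmono : MonotoneOn γ (Ioi 0)) {x : ℝ} (hx : 0 < x)
    (hint : IntegrableOn (fun s => γ s / s ^ 2) (Ioc 0 (2 * x))) :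
    γ x / x ≤ 4 * ∫ s in Ioc 0 (2 * x), γ s / s ^ 2 := by
  have hsub : Ioc x (2 * x) ⊆ Ioc 0 (2 * x) := Ioc_subset_Ioc_left hx.le
  refine (div_le_four_mul_setIntegral_Ioc_div_sq hmono hx (hnonneg x hx)
    (hint.mono_set hsub)).trans ?_
  gcongr 4 * ?_
  refine setIntegral_mono_set hint ?_ hsub.eventuallyLE
  filter_upwards [ae_restrict_mem measurableSet_Ioc] with s hs
  exact div_nonneg (hnonneg s hs.1) (sq_nonneg s)

theorem tendsto_const_mul_nhdsGT_zero {c : ℝ} (hc : 0 < c) :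
    Tendsto (fun x => c * x) (𝓝[>] 0) (𝓝[>] 0) :=
  tendsto_nhdsWithin_of_tendsto_nhds_of_eventually_within _
    (((continuous_const_mul c).tendsto' 0 0 (mul_zero c)).mono_left nhdsWithin_le_nhds)
    (eventually_mem_nhdsWithin.mono fun _ hx => mul_pos hc hx)

theorem dini_implies_differentiable_at_zero
    (γ : ℝ → ℝ) (R₀ : ℝ) (hR₀ : 0 < R₀)
    (hnonneg : ∀ r ∈ Set.Ioi (0:ℝ), 0 ≤ γ r)
    (hmono : MonotoneOn γ (Set.Ioi (0:ℝ)))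
    (hDini : IntegrableOn (fun r => γ r / r ^ 2) (Set.Ioc 0 R₀) volume) :
    HasDerivWithinAt (fun r => if r = 0 then 0 else γ r) 0 (Set.Ici (0:ℝ)) 0 := by
  have hslope : ∀ x : ℝ, 0 < x → slope (fun r => if r = 0 then 0 else γ r) 0 x = γ x / x :=
    fun x hx => by simp [slope_def_field, hx.ne']
  have hupper : Tendsto (fun x => 4 * ∫ s in Ioc 0 (2 * x), γ s / s ^ 2) (𝓝[>] 0) (𝓝 0) := by
    simpa using ((tendsto_setIntegral_Ioc_nhdsGT hR₀ hDini).comp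
      (tendsto_const_mul_nhdsGT_zero two_pos)).const_mul 4
  rw [← hasDerivWithinAt_Ioi_iff_Ici, hasDerivWithinAt_iff_tendsto_slope' self_notMem_Ioi]
  refine squeeze_zero' ?_ ?_ hupper
  · filter_upwards [self_mem_nhdsWithin] with x (hx : 0 < x)
    rw [hslope x hx]
    exact div_nonneg (hnonneg x hx) hx.le
  · filter_upwards [self_mem_nhdsWithin, Ioo_mem_nhdsGT (half_pos hR₀)] with x (hx : 0 < x) hxR
    rw [hslope x hx]
    exact div_le_four_mul_setIntegral_Ioc_zero_div_sq hnonneg hmono hx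
      (hDini.mono_set (Ioc_subset_Ioc_right (by linarith [hxR.2])))
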